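/- arXiv:2512.08836 — 7 statements merged into one kernel-verified Lean document; each statement's English description precedes it below -/
import Mathlib

section
/- Let f : X → X be a homeomorphism of a compact metric space X such that every point of X is uniformly recurrent for f. If A, B are nonempty closed subsets of X such that A is a recurrent point of the induced map 2^f on the hyperspace (with Hausdorff metric) and the pair (A,B) is asymptotic under 2^f (i.e. d_H(f^n(A), f^n(B)) → 0), then B ⊆ A. -/
open TopologicalSpace Metric Set Filter

/-- The induced map on the hyperspace of nonempty compact (= closed) subsets. -/
noncomputable def hyper {X : Type*} [MetricSpace X] (f : X ≃ₜ X) :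
    NonemptyCompacts X → NonemptyCompacts X :=
  fun A => ⟨⟨f '' A, A.isCompact.image f.continuous⟩, A.nonempty.image f⟩

/-- `x` is uniformly recurrent for `g`. -/
def IsUnifRec {α : Type*} [MetricSpace α] (g : α → α) (x : α) : Prop :=
  ∀ ε > (0:ℝ), ∃ N > 0, ∀ k : ℕ, dist (g^[k * N] x) x < ε

/-- `x` is recurrent for `g` (it belongs to its own ω-limit set). -/
def IsRec {α : Type*} [MetricSpace α] (g : α → α) (x : α) : Prop :=
  ∀ ε > (0:ℝ), ∀ m : ℕ, ∃ n ≥ m, 0 < n ∧ dist (g^[n] x) x < ε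

/-- `x` is almost periodic for `g`. -/
def IsAP {α : Type*} [MetricSpace α] (g : α → α) (x : α) : Prop :=
  ∀ ε > (0:ℝ), ∃ N : ℕ, ∀ n : ℕ, ∃ i < N, dist (g^[n + i] x) x < ε

/-- `(x, y)` is an asymptotic pair for `g`. -/
def Asymp {α : Type*} [MetricSpace α] (g : α → α) (x y : α) : Prop :=
  Filter.Tendsto (fun n => dist (g^[n] x) (g^[n] y)) Filter.atTop (nhds 0)

/-- `(x, y)` is a proximal pair for `g`. -/
def Proximal {α : Type*} [MetricSpace α] (g : α → α) (x y : α) : Prop :=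
  ∀ ε > (0:ℝ), ∀ m : ℕ, ∃ n ≥ m, dist (g^[n] x) (g^[n] y) < ε

/-- The ω-limit set of `x` under `g`. -/
def omegaSet {α : Type*} [MetricSpace α] (g : α → α) (x : α) : Set α :=
  {y | ∀ ε > (0:ℝ), ∀ m : ℕ, ∃ n ≥ m, dist (g^[n] x) y < ε}

/-- `M` is a minimal set of `g`. -/
def IsMinimalFor {α : Type*} [TopologicalSpace α] (g : α → α) (M : Set α) : Prop :=
  M.Nonempty ∧ IsClosed M ∧ Set.MapsTo g M M ∧
    ∀ M' ⊆ M, M'.Nonempty → IsClosed M' → Set.MapsTo g M' M' → M' = M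

/-- `A` is internally chain transitive for `g`. -/
def ICT {α : Type*} [MetricSpace α] (g : α → α) (A : Set α) : Prop :=
  ∀ a ∈ A, ∀ b ∈ A, ∀ ε > (0:ℝ), ∃ N : ℕ, 1 ≤ N ∧ ∃ c : ℕ → α,
    c 0 = a ∧ c N = b ∧ (∀ i ≤ N, c i ∈ A) ∧ ∀ i < N, dist (g (c i)) (c (i + 1)) < ε

section Aux

variable {Y : Type*} [MetricSpace Y]

/-- A recurrent point has recurrence times in every arithmetic progression class reachable,
in particular along multiples of any `N`. -/
lemma recPow {g : Y → Y} (hg : Continuous g) {y : Y} (h : IsRec g y) {N : ℕ} (hN : 0 < N) :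
    ∀ ε > (0:ℝ), ∀ m : ℕ, ∃ k ≥ m, dist (g^[k * N] y) y < ε := by
  set Q : ℕ → Prop := fun r => ∀ ε > (0:ℝ), ∀ m : ℕ, ∃ k ≥ m, dist (g^[k * N + r] y) y < ε with hQdef
  -- additivity of `Q`
  have Qadd : ∀ r s : ℕ, Q r → Q s → Q (r + s) := by
    intro r s hr hs ε hε m
    obtain ⟨k₁, hk₁m, hk₁⟩ := hr (ε/2) (half_pos hε) m
    have hc : ContinuousAt (g^[k₁ * N + r]) y := (hg.iterate _).continuousAt
    obtain ⟨δ, hδ, hδ'⟩ := Metric.continuousAt_iff.mp hc (ε/2) (half_pos hε)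
    obtain ⟨k₂, _, hk₂⟩ := hs δ hδ 0
    refine ⟨k₁ + k₂, le_trans hk₁m (Nat.le_add_right _ _), ?_⟩
    have hidx : g^[(k₁ + k₂) * N + (r + s)] y = g^[k₁ * N + r] (g^[k₂ * N + s] y) := by
      rw [← Function.iterate_add_apply]
      congr 1
      ring
    rw [hidx]
    calc dist (g^[k₁ * N + r] (g^[k₂ * N + s] y)) y
        ≤ dist (g^[k₁ * N + r] (g^[k₂ * N + s] y)) (g^[k₁ * N + r] y)
          + dist (g^[k₁ * N + r] y) y := dist_triangle _ _ _
      _ < ε/2 + ε/2 := add_lt_add (hδ' hk₂) hk₁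
      _ = ε := add_halves ε
  -- pigeonhole: some residue class works
  have hpig : ∃ r < N, Q r := by
    by_contra hcon
    push_neg at hcon
    have h' : ∀ r : ℕ, ∃ ε : ℝ, 0 < ε ∧ ∃ m : ℕ,
        (r < N → ∀ k ≥ m, ε ≤ dist (g^[k * N + r] y) y) := by
      intro r
      by_cases hrN : r < N
      · have hnr := hcon r hrN
        simp only [hQdef] at hnr
        push_neg at hnr
        obtain ⟨ε, hε, m, hm⟩ := hnr
        exact ⟨ε, hε, m, fun _ k hk => hm k hk⟩
      · exact ⟨1, one_pos, 0, fun hr => absurd hr hrN⟩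
    choose E hE M hM using h'
    have hne : (Finset.range N).Nonempty := ⟨0, Finset.mem_range.mpr hN⟩
    set ε₀ : ℝ := (Finset.range N).inf' hne E with hε₀def
    have hε₀ : 0 < ε₀ := by
      rw [hε₀def, Finset.lt_inf'_iff]
      intro b _
      exact hE b
    set m₀ : ℕ := (Finset.range N).sup M with hm₀def
    obtain ⟨n, hn, _, hdist⟩ := h ε₀ hε₀ ((m₀ + 1) * N)
    set r := n % N with hrdef
    set k := n / N with hkdef
    have hrN : r < N := Nat.mod_lt _ hN
    have hkm : M r ≤ k := by
      have h1 : m₀ + 1 ≤ k := (Nat.le_div_iff_mul_le hN).mpr hn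
      have h2 : M r ≤ m₀ := Finset.le_sup (Finset.mem_range.mpr hrN)
      omega
    have hkey := hM r hrN k hkm
    have hnk : k * N + r = n := by
      rw [hkdef, hrdef, Nat.mul_comm, Nat.div_add_mod]
    rw [hnk] at hkey
    have hErε : ε₀ ≤ E r := Finset.inf'_le _ (Finset.mem_range.mpr hrN)
    exact absurd hdist (not_lt.mpr (le_trans hErε hkey))
  obtain ⟨r, _, hQr⟩ := hpig
  -- iterate additivity to reach a multiple of N
  have hmul : ∀ j : ℕ, Q ((j + 1) * r) := by
    intro j
    induction j with
    | zero => simpa using hQr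
    | succ j ih =>
      have := Qadd ((j + 1) * r) r ih hQr
      have heq : (j + 1) * r + r = (j + 1 + 1) * r := by ring
      rwa [heq] at this
  intro ε hε m
  rcases Nat.eq_zero_or_pos r with hr0 | hrpos
  · obtain ⟨k, hk, hke⟩ := hQr ε hε m
    rw [hr0, Nat.add_zero] at hke
    exact ⟨k, hk, hke⟩
  · obtain ⟨k, hk, hke⟩ := hmul (N - 1) ε hε m
    refine ⟨k + r, le_trans hk (Nat.le_add_right _ _), ?_⟩
    have heq : k * N + (N - 1 + 1) * r = (k + r) * N := by
      have hN1 : N - 1 + 1 = N := Nat.succ_pred_eq_of_pos hN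
      rw [hN1]; ring
    rwa [heq] at hke

end Aux

/-- The carrier of the iterate of `hyper f` is the image under the iterate of `f`. -/
lemma hyper_iterate_coe {X : Type*} [MetricSpace X] (f : X ≃ₜ X) (C : NonemptyCompacts X)
    (n : ℕ) : (((hyper f)^[n] C : NonemptyCompacts X) : Set X) = (⇑f)^[n] '' (C : Set X) := by
  induction n with
  | zero => simp
  | succ n ih =>
    rw [Function.iterate_succ_apply']
    have hc : ((hyper f ((hyper f)^[n] C) : NonemptyCompacts X) : Set X)
        = ⇑f '' (((hyper f)^[n] C : NonemptyCompacts X) : Set X) := rfl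
    rw [hc, ih, ← Set.image_comp, ← Function.iterate_succ']

/-- `hyper f` is continuous. -/
lemma hyper_continuous {X : Type*} [MetricSpace X] [CompactSpace X] (f : X ≃ₜ X) :
    Continuous (hyper f) := by
  have huc : UniformContinuous (⇑f) := CompactSpace.uniformContinuous_of_continuous f.continuous
  rw [Metric.uniformContinuous_iff] at huc
  rw [Metric.continuous_iff]
  intro C ε hε
  obtain ⟨δ, hδ, hδ'⟩ := huc (ε/2) (half_pos hε)
  refine ⟨δ, hδ, fun D hDC => ?_⟩
  have hfin : EMetric.hausdorffEdist (D : Set X) (C : Set X) ≠ ⊤ :=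
    hausdorffEdist_ne_top_of_nonempty_of_bounded D.nonempty C.nonempty
      D.isCompact.isBounded C.isCompact.isBounded
  have hfin' : EMetric.hausdorffEdist (C : Set X) (D : Set X) ≠ ⊤ := by
    exact hausdorffEdist_ne_top_of_nonempty_of_bounded C.nonempty D.nonempty
      C.isCompact.isBounded D.isCompact.isBounded
  have hDC' : hausdorffDist (D : Set X) (C : Set X) < δ := by
    rw [NonemptyCompacts.dist_eq] at hDC; exact hDC
  have key : hausdorffDist (⇑f '' (D : Set X)) (⇑f '' (C : Set X)) ≤ ε/2 := by
    apply hausdorffDist_le_of_mem_dist (le_of_lt (half_pos hε))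
    · rintro x ⟨d, hd, rfl⟩
      obtain ⟨c, hc, hdc⟩ := exists_dist_lt_of_hausdorffDist_lt hd hDC' hfin
      exact ⟨f c, Set.mem_image_of_mem _ hc, le_of_lt (hδ' hdc)⟩
    · rintro x ⟨c, hc, rfl⟩
      have hCD' : hausdorffDist (C : Set X) (D : Set X) < δ := by
        rwa [hausdorffDist_comm] at hDC'
      obtain ⟨d, hd, hcd⟩ := exists_dist_lt_of_hausdorffDist_lt hc hCD' hfin'
      exact ⟨f d, Set.mem_image_of_mem _ hd, le_of_lt (hδ' hcd)⟩
  have : dist (hyper f D) (hyper f C) ≤ ε/2 := by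
    rw [NonemptyCompacts.dist_eq]
    exact key
  exact lt_of_le_of_lt this (half_lt_self hε)

theorem stmt0 {X : Type*} [MetricSpace X] [CompactSpace X] (f : X ≃ₜ X)
    (hur : ∀ x : X, IsUnifRec f x)
    (A B : NonemptyCompacts X)
    (hA : IsRec (hyper f) A) (hAB : Asymp (hyper f) A B) :
    (B : Set X) ⊆ (A : Set X) := by
  intro b hb
  have key : ∀ ε > (0:ℝ), infDist b (A : Set X) < ε := by
    intro ε hε
    have h3 : (0:ℝ) < ε/3 := by linarith
    obtain ⟨N, hN, hNrec⟩ := hur b (ε/3) h3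
    obtain ⟨M, hM⟩ := (Metric.tendsto_atTop.mp hAB) (ε/3) h3
    obtain ⟨k, hk, hkdist⟩ := recPow (hyper_continuous f) hA hN (ε/3) h3 (M+1)
    have hkN : M ≤ k * N := by
      have h1 : k ≤ k * N := Nat.le_mul_of_pos_right k hN
      omega
    have hasymp := hM (k*N) hkN
    rw [Real.dist_eq, sub_zero, abs_of_nonneg dist_nonneg] at hasymp
    have hBA : dist ((hyper f)^[k*N] B) A < 2*ε/3 := by
      calc dist ((hyper f)^[k*N] B) A
          ≤ dist ((hyper f)^[k*N] B) ((hyper f)^[k*N] A) + dist ((hyper f)^[k*N] A) A :=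
            dist_triangle _ _ _
        _ < ε/3 + ε/3 := add_lt_add (by rw [dist_comm]; exact hasymp) hkdist
        _ = 2*ε/3 := by ring
    have hmem : (⇑f)^[k*N] b ∈ (((hyper f)^[k*N] B : NonemptyCompacts X) : Set X) := by
      rw [hyper_iterate_coe]
      exact Set.mem_image_of_mem _ hb
    have hfin : EMetric.hausdorffEdist
        ((((hyper f)^[k*N] B) : NonemptyCompacts X) : Set X) (A : Set X) ≠ ⊤ :=
      hausdorffEdist_ne_top_of_nonempty_of_bounded ((hyper f)^[k*N] B).nonempty A.nonempty
        ((hyper f)^[k*N] B).isCompact.isBounded A.isCompact.isBounded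
    have h1 : infDist ((⇑f)^[k*N] b) (A : Set X)
        ≤ hausdorffDist ((((hyper f)^[k*N] B) : NonemptyCompacts X) : Set X) (A : Set X) :=
      infDist_le_hausdorffDist_of_mem hmem hfin
    have h2 : hausdorffDist ((((hyper f)^[k*N] B) : NonemptyCompacts X) : Set X) (A : Set X)
        = dist ((hyper f)^[k*N] B) A := (NonemptyCompacts.dist_eq).symm
    have h4 : infDist b (A : Set X)
        ≤ infDist ((⇑f)^[k*N] b) (A : Set X) + dist b ((⇑f)^[k*N] b) :=
      infDist_le_infDist_add_dist
    have h5 : dist b ((⇑f)^[k*N] b) < ε/3 := by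
      rw [dist_comm]; exact hNrec k
    rw [h2] at h1
    linarith
  have h0 : infDist b (A : Set X) ≤ 0 := by
    by_contra hc
    push_neg at hc
    exact lt_irrefl _ (key _ hc)
  have hz : infDist b (A : Set X) = 0 := le_antisymm h0 Metric.infDist_nonneg
  have hcl : b ∈ closure (A : Set X) :=
    (Metric.mem_closure_iff_infDist_zero A.nonempty).mpr hz
  rwa [A.isCompact.isClosed.closure_eq] at hcl
end

section
/- Let f : X → X be a homeomorphism of a compact metric space X such that every point is uniformly recurrent. Then for any recurrent point A of the induced hyperspace map 2^f, the intersection of the stable set of A with ω_{2^f}(A) equals {A}; that is, if B ∈ ω_{2^f}(A) and d_H(f^n(A), f^n(B)) → 0, then B = A. -/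
/-!
Let `B ∈ ω(A)` be asymptotic to `A` under `2^f`. Asymptoticity makes `B` recurrent as well, so
by symmetry it suffices to show `A ⊆ B` for `B` recurrent. Take `a ∈ A`; uniform recurrence
gives `N` with `f^{kN} a ≈ a` for all `k`. Recurrence of `B` passes to `(2^f)^N`: the return
times of a recurrent point contain all block sums `n_j + ⋯ + n_{l-1}` of some sequence, and by
pigeonhole on partial sums mod `N` one such block sum is divisible by `N`. At a large time `kN`
with `f^{kN} B ≈ B`, the point `f^{kN} a ≈ a` lies near `f^{kN} A ≈ f^{kN} B ≈ B`, so
`a ∈ closure B = B`.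
-/

open TopologicalSpace Metric Set Filter

theorem exists_lt_dvd_sum_Ico (a : ℕ → ℕ) {N : ℕ} (hN : 0 < N) :
    ∃ j l, j < l ∧ N ∣ ∑ i ∈ Finset.Ico j l, a i := by
  obtain ⟨j, l, hjl, hmod⟩ := Finite.exists_ne_map_eq_of_infinite
    fun l => (⟨(∑ i ∈ Finset.range l, a i) % N, Nat.mod_lt _ hN⟩ : Fin N)
  wlog hlt : j < l generalizing j l
  · exact this l j hjl.symm hmod.symm (lt_of_le_of_ne (not_lt.1 hlt) hjl.symm)
  refine ⟨j, l, hlt, Nat.modEq_zero_iff_dvd.1 <|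
    Nat.ModEq.add_left_cancel' (∑ i ∈ Finset.range j, a i) ?_⟩
  rw [Finset.sum_range_add_sum_Ico a hlt.le, add_zero]
  exact (Fin.mk.inj_iff.1 hmod).symm

section Recurrence

variable {α : Type*} [MetricSpace α] {g : α → α} {x : α}

theorem IsRec.exists_sum_Ico_returns (hg : Continuous g) (hx : IsRec g x) {ε : ℝ} (hε : 0 < ε)
    (L : ℕ) : ∃ n : ℕ → ℕ, (∀ i, L ≤ n i) ∧
      ∀ j l, j < l → dist (g^[∑ i ∈ Finset.Ico j l, n i] x) x < ε := by
  have hreturn : ∀ δ : {d : ℝ // 0 < d}, ∃ n ≥ L, ∃ δ' : {d : ℝ // 0 < d},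
      (δ' : ℝ) ≤ δ ∧ ∀ z, dist z x < δ' → dist (g^[n] z) x < δ := by
    rintro ⟨δ, hδ⟩
    obtain ⟨n, hn, -, hnx⟩ := hx (δ / 2) (half_pos hδ) L
    obtain ⟨η, hη, hηn⟩ :=
      Metric.continuousAt_iff.1 (hg.iterate n).continuousAt (δ / 2) (half_pos hδ)
    refine ⟨n, hn, ⟨min η δ, lt_min hη hδ⟩, min_le_right _ _, fun z hz => ?_⟩
    calc dist (g^[n] z) x ≤ dist (g^[n] z) (g^[n] x) + dist (g^[n] x) x := dist_triangle _ _ _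
      _ < δ / 2 + δ / 2 := add_lt_add (hηn (hz.trans_le (min_le_left _ _))) hnx
      _ = δ := add_halves δ
  choose n hnL δ' hδ'le hδ' using hreturn
  -- `g^[n (δs i)]` maps the `δs (i + 1)`-ball around `x` into the `δs i`-ball.
  set δs : ℕ → {d : ℝ // 0 < d} := fun i => δ'^[i] ⟨ε, hε⟩
  have hδs_succ (i : ℕ) : δs (i + 1) = δ' (δs i) := Function.iterate_succ_apply' _ _ _
  have hδs_anti : Antitone fun i => (δs i : ℝ) :=
    antitone_nat_of_succ_le fun i => by rw [hδs_succ]; exact hδ'le _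
  have hblock (d j : ℕ) :
      dist (g^[∑ i ∈ Finset.Ico j (j + d + 1), n (δs i)] x) x < δs j := by
    induction d generalizing j with
    | zero => simpa using hδ' (δs j) x (by simpa using (δ' (δs j)).2)
    | succ d ih =>
      rw [Finset.sum_eq_sum_Ico_succ_bot (by omega), Function.iterate_add_apply]
      refine hδ' _ _ ?_
      rw [← hδs_succ, show j + (d + 1) + 1 = j + 1 + d + 1 by omega]
      exact ih (j + 1)
  refine ⟨fun i => n (δs i), fun i => hnL _, fun j l hjl => ?_⟩
  obtain ⟨d, rfl⟩ : ∃ d, l = j + d + 1 := ⟨l - j - 1, by omega⟩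
  exact (hblock d j).trans_le (hδs_anti (Nat.zero_le j))

theorem IsRec.iterate (hg : Continuous g) (hx : IsRec g x) {N : ℕ} (hN : 0 < N) :
    IsRec g^[N] x := by
  intro ε hε m
  obtain ⟨n, hnL, hn⟩ := hx.exists_sum_Ico_returns hg hε ((m + 1) * N)
  obtain ⟨j, l, hjl, k, hk⟩ := exists_lt_dvd_sum_Ico n hN
  have hle : (m + 1) * N ≤ k * N := by
    rw [mul_comm k, ← hk]
    exact (hnL j).trans (Finset.single_le_sum (fun _ _ => Nat.zero_le _)
      (Finset.mem_Ico.2 ⟨le_rfl, hjl⟩))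
  have hmk := Nat.le_of_mul_le_mul_right hle hN
  refine ⟨k, by omega, by omega, ?_⟩
  rw [← Function.iterate_mul, ← hk]
  exact hn j l hjl

theorem IsRec.mem_omegaSet (hx : IsRec g x) : x ∈ omegaSet g x := fun ε hε m =>
  let ⟨n, hn, _, hnx⟩ := hx ε hε m
  ⟨n, hn, hnx⟩

theorem Asymp.refl (g : α → α) (x : α) : Asymp g x x := by
  simp only [Asymp, dist_self, tendsto_const_nhds]

theorem Asymp.symm {y : α} (h : Asymp g x y) : Asymp g y x := by
  simpa only [Asymp, dist_comm] using h

theorem Asymp.isRec_of_mem_omegaSet {y : α} (hxy : Asymp g x y) (hy : y ∈ omegaSet g x) :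
    IsRec g y := by
  intro ε hε m
  obtain ⟨m', hm'⟩ := eventually_atTop.1 (hxy.eventually_lt_const (half_pos hε))
  obtain ⟨n, hn, hnx⟩ := hy (ε / 2) (half_pos hε) (max (max m' m) 1)
  refine ⟨n, by omega, by omega, ?_⟩
  calc dist (g^[n] y) y ≤ dist (g^[n] y) (g^[n] x) + dist (g^[n] x) y := dist_triangle _ _ _
    _ < ε / 2 + ε / 2 := add_lt_add (by rw [dist_comm]; exact hm' n (by omega)) hnx
    _ = ε := add_halves ε

end Recurrence

section Hyperspace

variable {X : Type*} [MetricSpace X]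

theorem continuous_hyper (f : X ≃ₜ X) : Continuous (hyper f) :=
  f.continuous.nonemptyCompacts_map

theorem coe_hyper_iterate (f : X ≃ₜ X) (A : NonemptyCompacts X) (n : ℕ) :
    (((hyper f)^[n] A : NonemptyCompacts X) : Set X) = (⇑f)^[n] '' A := by
  induction n with
  | zero => simp
  | succ n ih =>
    rw [Function.iterate_succ_apply', Function.iterate_succ', Set.image_comp, ← ih]
    rfl

theorem TopologicalSpace.NonemptyCompacts.exists_dist_lt_of_dist_lt {A B : NonemptyCompacts X}
    {r : ℝ} (h : dist A B < r) {a : X} (ha : a ∈ A) : ∃ b ∈ B, dist a b < r :=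
  exists_dist_lt_of_hausdorffDist_lt ha h <| hausdorffEDist_ne_top_of_nonempty_of_bounded
    A.nonempty B.nonempty A.isCompact.isBounded B.isCompact.isBounded

theorem coe_subset_of_asymp_of_isRec (f : X ≃ₜ X) {C D : NonemptyCompacts X}
    (hC : ∀ a ∈ C, IsUnifRec f a) (hD : IsRec (hyper f) D) (hCD : Asymp (hyper f) C D) :
    (C : Set X) ⊆ D := by
  intro a ha
  rw [← D.isCompact.isClosed.closure_eq, Metric.mem_closure_iff]
  intro ε hε
  have hε3 : 0 < ε / 3 := by positivity
  obtain ⟨N, hN, hNa⟩ := hC a ha (ε / 3) hε3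
  obtain ⟨m, hm⟩ := eventually_atTop.1 (hCD.eventually_lt_const hε3)
  obtain ⟨k, hk, -, hkD⟩ := hD.iterate (continuous_hyper f) hN (ε / 3) hε3 m
  rw [← Function.iterate_mul] at hkD
  have hfa : (⇑f)^[N * k] a ∈ (hyper f)^[N * k] C := by
    rw [← SetLike.mem_coe, coe_hyper_iterate]
    exact Set.mem_image_of_mem _ ha
  obtain ⟨y, hy, hay⟩ := NonemptyCompacts.exists_dist_lt_of_dist_lt
    (hm (N * k) (hk.trans (Nat.le_mul_of_pos_left k hN))) hfa
  obtain ⟨b, hb, hyb⟩ := NonemptyCompacts.exists_dist_lt_of_dist_lt hkD hy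
  refine ⟨b, hb, ?_⟩
  have hNa' : dist a ((⇑f)^[N * k] a) < ε / 3 := by rw [dist_comm, mul_comm]; exact hNa k
  calc dist a b ≤ dist a ((⇑f)^[N * k] a) + dist ((⇑f)^[N * k] a) y + dist y b :=
        dist_triangle4 _ _ _ _
    _ < ε / 3 + ε / 3 + ε / 3 := by gcongr
    _ = ε := by ring

end Hyperspace

theorem stmt1_general {X : Type*} [MetricSpace X] (f : X ≃ₜ X)
    (hur : ∀ x : X, IsUnifRec f x)
    (A : NonemptyCompacts X) (hA : IsRec (hyper f) A) :
    {B | Asymp (hyper f) A B} ∩ omegaSet (hyper f) A = {A} := by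
  ext B
  refine ⟨fun ⟨hAB, hB⟩ => ?_, ?_⟩
  · have hBA : (B : Set X) ⊆ A := coe_subset_of_asymp_of_isRec f (fun b _ => hur b) hA hAB.symm
    have hAB' : (A : Set X) ⊆ B :=
      coe_subset_of_asymp_of_isRec f (fun a _ => hur a) (hAB.isRec_of_mem_omegaSet hB) hAB
    exact NonemptyCompacts.ext (hBA.antisymm hAB')
  · rintro rfl
    exact ⟨Asymp.refl _ _, hA.mem_omegaSet⟩

theorem stmt1 {X : Type*} [MetricSpace X] [CompactSpace X] (f : X ≃ₜ X)
    (hur : ∀ x : X, IsUnifRec f x)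
    (A : NonemptyCompacts X) (hA : IsRec (hyper f) A) :
    {B | Asymp (hyper f) A B} ∩ omegaSet (hyper f) A = {A} :=
  stmt1_general f hur A hA
end

section
/- Let f : X → X and g : Y → Y be continuous maps of compact metric spaces, and let π : X → Y be a continuous surjection with π ∘ f = g ∘ π. If A is a closed f-invariant subset of X that is internally chain transitive for f, then π(A) is internally chain transitive for g. -/
/- Uniform continuity of `π` (automatic on a compact space) turns δ-chains of `f` into
ε-chains of `g`: the semiconjugacy rewrites each jump `g (π xᵢ) ⟶ π xᵢ₊₁` as
`π (f xᵢ) ⟶ π xᵢ₊₁`. -/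

open TopologicalSpace Metric Set Filter

theorem ICT.image_of_semiconj {α β : Type*} [MetricSpace α] [MetricSpace β]
    {f : α → α} {g : β → β} {π : α → β} (hπ : UniformContinuous π)
    (hsemi : Function.Semiconj π f g) {A : Set α} (hA : ICT f A) : ICT g (π '' A) := by
  rintro _ ⟨a, ha, rfl⟩ _ ⟨b, hb, rfl⟩ ε hε
  obtain ⟨δ, hδ, hπδ⟩ := Metric.uniformContinuous_iff.mp hπ ε hε
  obtain ⟨N, hN, c, hc0, hcN, hcA, hchain⟩ := hA a ha b hb δ hδ
  refine ⟨N, hN, π ∘ c, congrArg π hc0, congrArg π hcN,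
    fun i hi => mem_image_of_mem π (hcA i hi), fun i hi => ?_⟩
  simpa only [Function.comp_apply, ← hsemi (c i)] using hπδ (hchain i hi)

theorem stmt3_general {X Y : Type*} [MetricSpace X] [CompactSpace X] [MetricSpace Y]
    (f : X → X) (g : Y → Y)
    (π : X → Y) (hπ : Continuous π)
    (hcomm : π ∘ f = g ∘ π)
    (A : Set X) (hict : ICT f A) :
    ICT g (π '' A) :=
  hict.image_of_semiconj (CompactSpace.uniformContinuous_of_continuous hπ)
    (Function.semiconj_iff_comp_eq.mpr hcomm)

theorem stmt3 {X Y : Type*} [MetricSpace X] [CompactSpace X] [MetricSpace Y] [CompactSpace Y]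
    (f : X → X) (g : Y → Y) (hf : Continuous f) (hg : Continuous g)
    (π : X → Y) (hπ : Continuous π) (hsurj : Function.Surjective π)
    (hcomm : π ∘ f = g ∘ π)
    (A : Set X) (hA : IsClosed A) (hinv : Set.MapsTo f A A) (hict : ICT f A) :
    ICT g (π '' A) :=
  stmt3_general f g π hπ hcomm A hict
end

section
/- Let f : X → X be a continuous map of a compact metric space and let (A_n) be a sequence of closed subsets of X, each internally chain transitive for f, converging in the Hausdorff metric to a closed set C. If every point of C is periodic for f, then C has finitely many connected components which form a single periodic cycle under f. -/
open TopologicalSpace Metric Set Filter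

/-!
The limit `C` is again internally chain transitive, and a clopen subset of `C` that `f` maps into
itself absorbs every sufficiently fine chain. So no proper nonempty clopen subset of `C` is forward
invariant, and the same holds for the map `G` induced on the space `Q` of connected components of
`C`, which is compact, Hausdorff and totally disconnected. All points of `Q` are periodic, so by
Baire some set of points of period `m` has interior and contains a nonempty clopen `V`; then
`⋃ k < m, G⁻ᵏ V` is clopen and invariant, hence all of `Q`, and `G^m = id`. If `q` lay outside the
finite orbit of `r`, a clopen neighbourhood of `q` missing that orbit would give in the same way
an invariant clopen set containing `q` but not `r`. Hence `Q` is a single periodic orbit.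
-/

open Function Topology

theorem Function.bijective_of_periodicPts_eq_univ {α : Type*} {f : α → α}
    (h : periodicPts f = univ) : Bijective f :=
  bijOn_univ.1 (h ▸ bijOn_periodicPts f)

theorem Function.mapsTo_biUnion_preimage_iterate {α : Type*} {g : α → α} {V : Set α} {m : ℕ}
    (hm : 0 < m) (hV : ∀ y ∈ V, g^[m] y = y) :
    MapsTo g (⋃ k ∈ Finset.range m, g^[k] ⁻¹' V) (⋃ k ∈ Finset.range m, g^[k] ⁻¹' V) := by
  intro y hy
  simp only [mem_iUnion₂, Finset.mem_range, mem_preimage] at hy ⊢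
  obtain ⟨k, hk, hyk⟩ := hy
  rcases k with _ | j
  · refine ⟨m - 1, by omega, ?_⟩
    rwa [← iterate_succ_apply, Nat.succ_eq_add_one, Nat.sub_add_cancel hm, hV y hyk]
  · exact ⟨j, by omega, by rwa [← iterate_succ_apply]⟩

def IsClopenMinimal {α : Type*} [TopologicalSpace α] (g : α → α) : Prop :=
  ∀ E : Set α, IsClopen E → E.Nonempty → MapsTo g E E → E = univ

namespace ICT

variable {α : Type*} [MetricSpace α] {g : α → α}

theorem mapsTo {A : Set α} (h : ICT g A) (hA : IsClosed A) : MapsTo g A A := fun a ha =>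
  hA.closure_eq ▸ Metric.mem_closure_iff.2 fun ε hε => by
    obtain ⟨N, hN, c, hc0, -, hcA, hstep⟩ := h a ha a ha ε hε
    exact ⟨c 1, hcA 1 hN, hc0 ▸ hstep 0 hN⟩

theorem restrict {A : Set α} (h : ICT g A) (hmaps : MapsTo g A A) :
    ICT (hmaps.restrict g A A) univ := by
  rintro a - b - ε hε
  obtain ⟨N, hN, c, hc0, hcN, hcA, hstep⟩ := h a a.2 b b.2 ε hε
  let c' : ℕ → A := fun i => ⟨c (min i N), hcA _ (min_le_right i N)⟩
  have hc' (i : ℕ) (hi : i ≤ N) : (c' i : α) = c i := by simp [c', hi]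
  refine ⟨N, hN, c', Subtype.ext ?_, Subtype.ext ?_, fun _ _ => mem_univ _, fun i hi => ?_⟩
  · rw [hc' 0 N.zero_le, hc0]
  · rw [hc' N le_rfl, hcN]
  · rw [Subtype.dist_eq, MapsTo.val_restrict_apply, hc' i hi.le, hc' (i + 1) hi]
    exact hstep i hi

theorem isClopenMinimal [CompactSpace α] (h : ICT g univ) : IsClopenMinimal g := by
  rintro E hE ⟨a, ha⟩ hmaps
  obtain ⟨δ, hδ, hthick⟩ := hE.isClosed.isCompact.exists_thickening_subset_open hE.isOpen le_rfl
  refine eq_univ_of_forall fun b => ?_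
  obtain ⟨N, -, c, hc0, hcN, -, hstep⟩ := h a trivial b trivial δ hδ
  have hcE : ∀ i ≤ N, c i ∈ E := by
    intro i
    induction i with
    | zero => exact fun _ => hc0 ▸ ha
    | succ i ih =>
      refine fun hi => hthick (mem_thickening_iff.2 ⟨g (c i), hmaps (ih (by omega)), ?_⟩)
      rw [dist_comm]
      exact hstep i hi
  exact hcN ▸ hcE N le_rfl

theorem of_tendsto {A : ℕ → NonemptyCompacts α} {C : NonemptyCompacts α}
    (hg : UniformContinuous g) (hA : ∀ n, ICT g (A n)) (hlim : Tendsto A atTop (𝓝 C)) :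
    ICT g C := by
  intro a ha b hb ε hε
  obtain ⟨δ, hδ, hgδ⟩ := Metric.uniformContinuous_iff.1 hg (ε / 3) (by positivity)
  set η := min δ (ε / 3)
  have hη : 0 < η := by positivity
  obtain ⟨n, hn⟩ := (Metric.tendsto_atTop.1 hlim η hη).imp fun n hn => hn n le_rfl
  have hH : hausdorffDist (A n : Set α) C < η := hn
  have hfin : hausdorffEDist (A n : Set α) C ≠ ⊤ :=
    hausdorffEDist_ne_top_of_nonempty_of_bounded (A n).nonempty C.nonempty
      (A n).isCompact.isBounded C.isCompact.isBounded
  obtain ⟨a', ha', haa'⟩ := exists_dist_lt_of_hausdorffDist_lt' ha hH hfin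
  obtain ⟨b', hb', hbb'⟩ := exists_dist_lt_of_hausdorffDist_lt' hb hH hfin
  choose! p hpC hpd using fun x (hx : x ∈ (A n : Set α)) =>
    exists_dist_lt_of_hausdorffDist_lt hx hH hfin
  obtain ⟨N, hN, c', hc'0, hc'N, hc'A, hstep⟩ := hA n a' ha' b' hb' η hη
  let c : ℕ → α := fun i => if i = 0 then a else if i = N then b else p (c' i)
  have hc : ∀ i ≤ N, c i ∈ C ∧ dist (c' i) (c i) < η := by
    intro i hi
    simp only [c]
    split_ifs with h0 hNi
    · exact ⟨ha, by rwa [h0, hc'0]⟩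
    · exact ⟨hb, by rwa [hNi, hc'N]⟩
    · exact ⟨hpC _ (hc'A i hi), hpd _ (hc'A i hi)⟩
  refine ⟨N, hN, c, if_pos rfl, by simp [c]; omega, fun i hi => (hc i hi).1, fun i hi => ?_⟩
  have hη₁ : η ≤ ε / 3 := min_le_right _ _
  calc dist (g (c i)) (c (i + 1))
      ≤ dist (g (c i)) (g (c' i)) + dist (g (c' i)) (c' (i + 1)) + dist (c' (i + 1)) (c (i + 1)) :=
        dist_triangle4 _ _ _ _
    _ < ε / 3 + η + η := by
        gcongr
        · exact hgδ (by rw [dist_comm]; exact (hc i hi.le).2.trans_le (min_le_left _ _))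
        · exact hstep i hi
        · exact (hc (i + 1) hi).2
    _ ≤ ε := by linarith

end ICT

namespace IsClopenMinimal

variable {α : Type*} [TopologicalSpace α] {g : α → α}

theorem exists_iterate_mem (h : IsClopenMinimal g) (hg : Continuous g) {V : Set α}
    (hV : IsClopen V) (hne : V.Nonempty) {m : ℕ} (hm : 0 < m) (hfix : ∀ y ∈ V, g^[m] y = y)
    (y : α) : ∃ k < m, g^[k] y ∈ V := by
  have hE := h _ (isClopen_biUnion_finset fun k _ => hV.preimage (hg.iterate k))
    (hne.mono fun x hx => mem_iUnion₂.2 ⟨0, Finset.mem_range.2 hm, hx⟩)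
    (mapsTo_biUnion_preimage_iterate hm hfix)
  simpa using hE.ge (mem_univ y)

variable [CompactSpace α] [T2Space α] [TotallyDisconnectedSpace α]

theorem exists_iterate_eq_id (h : IsClopenMinimal g) (hg : Continuous g)
    (hper : periodicPts g = univ) : ∃ m > 0, g^[m] = id := by
  rcases isEmpty_or_nonempty α with hα | hα
  · exact ⟨1, one_pos, funext isEmptyElim⟩
  obtain ⟨m, x, hx⟩ := nonempty_interior_of_iUnion_of_closed
    (fun n : ℕ+ => isClosed_fixedPoints (hg.iterate n)) ((iUnion_pnat_ptsOfPeriod g).trans hper)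
  obtain ⟨V, hV, hxV, hVm⟩ := compact_exists_isClopen_in_isOpen isOpen_interior hx
  have hfix : ∀ y ∈ V, g^[m] y = y := fun y hy => interior_subset (s := fixedPoints _) (hVm hy)
  refine ⟨m, m.pos, funext fun y => ?_⟩
  obtain ⟨k, -, hk⟩ := h.exists_iterate_mem hg hV ⟨x, hxV⟩ m.pos hfix y
  refine ((bijective_of_periodicPts_eq_univ hper).1.iterate k) ?_
  rw [← iterate_add_apply, add_comm, iterate_add_apply, hfix _ hk, id]

theorem exists_iterate_eq (h : IsClopenMinimal g) (hg : Continuous g) {m : ℕ} (hm : 0 < m)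
    (hid : g^[m] = id) (q r : α) : ∃ k, g^[k] r = q := by
  by_contra! hq
  obtain ⟨V, hV, hqV, hVO⟩ := compact_exists_isClopen_in_isOpen
    ((finite_Iio m).image (g^[·] r)).isClosed.isOpen_compl fun ⟨k, _, hk⟩ => hq k hk
  obtain ⟨k, hk, hkV⟩ := h.exists_iterate_mem hg hV ⟨q, hqV⟩ hm (fun y _ => congrFun hid y) r
  exact hVO hkV ⟨k, hk, rfl⟩

end IsClopenMinimal

section ConnectedComponents

variable {Y : Type*} [TopologicalSpace Y] {F : Y → Y}

theorem IsClopenMinimal.connectedComponentsMap (h : IsClopenMinimal F) (hF : Continuous F) :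
    IsClopenMinimal hF.connectedComponentsMap := fun _ hE hne hmaps =>
  ConnectedComponents.surjective_coe.preimage_injective <|
    (h _ (hE.preimage ConnectedComponents.continuous_coe)
      (hne.preimage ConnectedComponents.surjective_coe) fun _ hy => hmaps hy).trans
      preimage_univ.symm

theorem Continuous.periodicPts_connectedComponentsMap_eq_univ (hF : Continuous F)
    (hper : periodicPts F = univ) : periodicPts hF.connectedComponentsMap = univ :=
  eq_univ_of_forall <| ConnectedComponents.surjective_coe.forall.2 fun y => by
    obtain ⟨n, hn, hy⟩ := mem_periodicPts.1 (hper ▸ mem_univ y)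
    exact mk_mem_periodicPts hn (hy.map fun _ => rfl)

theorem Continuous.image_connectedComponent_eq (hF : Continuous F) (hsurj : Surjective F)
    (hinj : Injective hF.connectedComponentsMap) (y : Y) :
    F '' connectedComponent y = connectedComponent (F y) := by
  refine (hF.image_connectedComponent_subset y).antisymm fun z hz => ?_
  obtain ⟨w, rfl⟩ := hsurj z
  rw [← ConnectedComponents.coe_eq_coe'] at hz
  exact ⟨w, ConnectedComponents.coe_eq_coe'.1 (hinj hz), rfl⟩

theorem IsClopenMinimal.exists_connectedComponent_cycle [CompactSpace Y] [T2Space Y]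
    [Nonempty Y] (h : IsClopenMinimal F) (hF : Continuous F) (hper : periodicPts F = univ) :
    ∃ a : Y, ∃ N > 0, (∀ y, ∃ i < N, connectedComponent y = connectedComponent (F^[i] a)) ∧
      ∀ i, F '' connectedComponent (F^[i] a) = connectedComponent (F^[(i + 1) % N] a) := by
  set G := hF.connectedComponentsMap
  have hsemi : Semiconj ConnectedComponents.mk F G := fun _ => rfl
  have hperG : periodicPts G = univ := hF.periodicPts_connectedComponentsMap_eq_univ hper
  have hG : Continuous G := hF.connectedComponentsMap_continuous
  obtain ⟨m, hm, hid⟩ := (h.connectedComponentsMap hF).exists_iterate_eq_id hG hperG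
  obtain ⟨a⟩ := ‹Nonempty Y›
  set N := minimalPeriod G (ConnectedComponents.mk a)
  have hN : 0 < N := minimalPeriod_pos_of_mem_periodicPts (hperG ▸ mem_univ _)
  have hmod (k : ℕ) : connectedComponent (F^[k] a) = connectedComponent (F^[k % N] a) := by
    rw [← ConnectedComponents.coe_eq_coe, (hsemi.iterate_right _).eq, (hsemi.iterate_right _).eq,
      iterate_mod_minimalPeriod_eq]
  refine ⟨a, N, hN, fun y => ?_, fun i => ?_⟩
  · obtain ⟨k, hk⟩ := (h.connectedComponentsMap hF).exists_iterate_eq hG hm hid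
      (ConnectedComponents.mk y) (ConnectedComponents.mk a)
    refine ⟨k % N, Nat.mod_lt k hN, ?_⟩
    rw [← hmod, ← ConnectedComponents.coe_eq_coe, (hsemi.iterate_right _).eq, hk]
  · rw [hF.image_connectedComponent_eq (bijective_of_periodicPts_eq_univ hper).2
      (bijective_of_periodicPts_eq_univ hperG).1, ← iterate_succ_apply' F i a, hmod]

end ConnectedComponents

theorem stmt6 {X : Type*} [MetricSpace X] [CompactSpace X]
    (f : X → X) (hf : Continuous f)
    (A : ℕ → NonemptyCompacts X) (hict : ∀ n, ICT f (A n : Set X))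
    (C : NonemptyCompacts X)
    (hconv : Filter.Tendsto A Filter.atTop (nhds C))
    (hper : ∀ x ∈ (C : Set X), ∃ n > 0, f^[n] x = x) :
    ∃ N > 0, ∃ D : ℕ → Set X,
      (∀ x ∈ (C : Set X), ∃ i < N, connectedComponentIn (C : Set X) x = D i) ∧
      (∀ i < N, ∃ x ∈ (C : Set X), D i = connectedComponentIn (C : Set X) x) ∧
      (∀ i < N, f '' D i = D ((i + 1) % N)) := by
  have hC : ICT f C := ICT.of_tendsto (CompactSpace.uniformContinuous_of_continuous hf) hict hconv
  have hmaps : MapsTo f C C := hC.mapsTo C.isCompact.isClosed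
  have : CompactSpace C := isCompact_iff_compactSpace.1 C.isCompact
  have : Nonempty C := C.nonempty.to_subtype
  set F := hmaps.restrict f C C
  have hperF : periodicPts F = univ := eq_univ_of_forall fun x => by
    obtain ⟨n, hn, hx⟩ := hper x x.2
    exact mk_mem_periodicPts hn (Subtype.ext ((hmaps.coe_iterate_restrict x n).trans hx))
  obtain ⟨a, N, hN, hcover, hcycle⟩ :=
    (hC.restrict hmaps).isClopenMinimal.exists_connectedComponent_cycle (hf.restrict hmaps) hperF
  have hD (i : ℕ) :
      connectedComponentIn (C : Set X) (F^[i] a) = Subtype.val '' connectedComponent (F^[i] a) :=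
    connectedComponentIn_eq_image (F^[i] a).2
  refine ⟨N, hN, fun i => Subtype.val '' connectedComponent (F^[i] a), fun x hx => ?_,
    fun i _ => ⟨_, (F^[i] a).2, (hD i).symm⟩, fun i _ => ?_⟩
  · obtain ⟨i, hi, hx'⟩ := hcover ⟨x, hx⟩
    exact ⟨i, hi, by rw [connectedComponentIn_eq_image hx, hx']⟩
  · beta_reduce
    rw [← hcycle i, image_image, image_image]
    rfl
end

section
/- Every pointwise periodic homeomorphism of a compact, totally disconnected (zero-dimensional) metric space is equicontinuous. -/
open TopologicalSpace Metric Set Filter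

/-! A pointwise periodic continuous map `g` of a compact Hausdorff space is injective, and for
a clopen set `V` there is a bound `N` such that every orbit staying in `V` for `N` steps stays in
`V` forever: otherwise compactness produces a periodic point that leaves `V` in one step although
its whole backward orbit lies in `V`. Hence the points whose orbits follow a given periodic
itinerary of clopen sets form an open set. In a totally disconnected space the finitely many
points of the orbit of `z` have arbitrarily small clopen neighbourhoods, so the orbits of all
points near `z` shadow that of `z` forever; this is equicontinuity, uniform by compactness. -/

open Function

namespace Function

variable {α : Type*} {g : α → α}

theorem injective_of_forall_mem_periodicPts (hper : ∀ x, x ∈ periodicPts g) : Injective g := by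
  have huniv : periodicPts g = univ := eq_univ_of_forall hper
  exact injOn_univ.1 (huniv ▸ (bijOn_periodicPts g).injOn)

end Function

section PointwisePeriodic

variable {X : Type*} [TopologicalSpace X] [CompactSpace X] [T2Space X] {g : X → X}

theorem exists_iterate_succ_mem_of_forall_le (hg : Continuous g)
    (hper : ∀ x, x ∈ periodicPts g) {V : Set X} (hV : IsClopen V) :
    ∃ N, ∀ y, (∀ i ≤ N, g^[i] y ∈ V) → g^[N + 1] y ∈ V := by
  set S : ℕ → Set X := fun N => g^[N] '' {y | ∀ i ≤ N, g^[i] y ∈ V} ∩ g ⁻¹' Vᶜ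
  have hS_closed : ∀ N, IsClosed (S N) := by
    intro N
    have hsegment : IsClosed {y | ∀ i ≤ N, g^[i] y ∈ V} := by
      simp only [ofPred_forall]
      exact isClosed_iInter fun i => isClosed_iInter fun _ => hV.1.preimage (hg.iterate i)
    exact (hsegment.isCompact.image (hg.iterate N)).isClosed.inter
      (hV.2.isClosed_compl.preimage hg)
  have hS_anti : ∀ N, S (N + 1) ⊆ S N := by
    rintro N _ ⟨⟨y, hy, rfl⟩, hexit⟩
    refine ⟨⟨g y, fun i hi => ?_, iterate_succ_apply g N y⟩, hexit⟩
    rw [← iterate_succ_apply]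
    exact hy (i + 1) (by omega)
  have hS_empty : ⋂ N, S N = ∅ := by
    refine eq_empty_of_forall_notMem fun w hw => ?_
    obtain ⟨P, hP, hwP⟩ := hper w
    obtain ⟨⟨y, hy, hyw⟩, hgw⟩ := mem_iInter.1 hw (P - 1)
    -- `g w` is the unique point mapped to `w` by `g^[P - 1]`
    have hgw_eq : g^[P - 1] (g w) = g^[P - 1] y := by
      rw [hyw, ← iterate_succ_apply, Nat.succ_eq_add_one, Nat.sub_add_cancel hP]
      exact hwP
    have : g w = y := (injective_of_forall_mem_periodicPts hper).iterate _ hgw_eq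
    exact hgw (this ▸ hy 0 (Nat.zero_le _))
  obtain ⟨N, hN⟩ : ∃ N, S N = ∅ := by
    by_contra! hne
    exact (IsCompact.nonempty_iInter_of_sequence_nonempty_isCompact_isClosed S hS_anti
      hne (hS_closed 0).isCompact hS_closed).ne_empty hS_empty
  refine ⟨N, fun y hy => by_contra fun hexit => ?_⟩
  refine (eq_empty_iff_forall_notMem.1 hN) (g^[N] y) ⟨⟨y, hy, rfl⟩, ?_⟩
  rwa [mem_preimage, ← iterate_succ_apply' g]

theorem exists_forall_iterate_mem_of_forall_le (hg : Continuous g)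
    (hper : ∀ x, x ∈ periodicPts g) {V : Set X} (hV : IsClopen V) :
    ∃ N, ∀ x, (∀ i ≤ N, g^[i] x ∈ V) → ∀ m, g^[m] x ∈ V := by
  obtain ⟨N, hN⟩ := exists_iterate_succ_mem_of_forall_le hg hper hV
  refine ⟨N, fun x hx m => ?_⟩
  induction m using Nat.strong_induction_on with
  | _ m ih =>
    by_cases hmN : m ≤ N
    · exact hx m hmN
    have hsegment : ∀ i ≤ N, g^[i] (g^[m - 1 - N] x) ∈ V := fun i hi => by
      rw [← iterate_add_apply]
      exact ih _ (by omega)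
    have hm : m = N + 1 + (m - 1 - N) := by omega
    simpa only [← iterate_add_apply, ← hm] using hN _ hsegment

theorem isOpen_setOf_forall_iterate_mem (hg : Continuous g) (hper : ∀ x, x ∈ periodicPts g)
    {V : Set X} (hV : IsClopen V) : IsOpen {x | ∀ m, g^[m] x ∈ V} := by
  obtain ⟨N, hN⟩ := exists_forall_iterate_mem_of_forall_le hg hper hV
  have hset : {x | ∀ m, g^[m] x ∈ V} = ⋂ i ∈ Iic N, g^[i] ⁻¹' V :=
    Subset.antisymm (fun x hx => mem_biInter fun i _ => hx i)
      (fun x hx => hN x fun i hi => mem_iInter₂.1 hx i hi)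
  rw [hset]
  exact (finite_Iic N).isOpen_biInter fun i _ => hV.2.preimage (hg.iterate i)

theorem isOpen_setOf_forall_iterate_mem_mod (hg : Continuous g) (hper : ∀ x, x ∈ periodicPts g)
    {p : ℕ} (hp : 0 < p) {C : ℕ → Set X} (hC : ∀ i, IsClopen (C i)) :
    IsOpen {x | ∀ n, g^[n] x ∈ C (n % p)} := by
  set V := ⋂ i ∈ Iio p, g^[i] ⁻¹' C i
  have hV : IsClopen V := (finite_Iio p).isClopen_biInter fun i _ => (hC i).preimage (hg.iterate i)
  have hset : {x | ∀ n, g^[n] x ∈ C (n % p)} = {x | ∀ m, (g^[p])^[m] x ∈ V} := by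
    ext x
    refine ⟨fun hx m => mem_iInter₂.2 fun i hi => ?_, fun hx n => ?_⟩
    · rw [mem_preimage, ← iterate_mul, ← iterate_add_apply]
      simpa [Nat.add_mul_mod_self_left, Nat.mod_eq_of_lt (mem_Iio.1 hi)] using hx (i + p * m)
    · have := mem_iInter₂.1 (hx (n / p)) (n % p) (mem_Iio.2 (Nat.mod_lt n hp))
      rwa [mem_preimage, ← iterate_mul, ← iterate_add_apply, Nat.mod_add_div] at this
  rw [hset]
  exact isOpen_setOf_forall_iterate_mem (hg.iterate p)
    (fun x => (hper x).imp fun _ ⟨hn, hx⟩ => ⟨hn, hx.iterate p⟩) hV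

end PointwisePeriodic

theorem equicontinuous_iterate_of_forall_mem_periodicPts {X : Type*} [UniformSpace X]
    [CompactSpace X] [T2Space X] [TotallyDisconnectedSpace X] {g : X → X} (hg : Continuous g)
    (hper : ∀ x, x ∈ periodicPts g) : Equicontinuous fun n => g^[n] := by
  intro z U hU
  have hC : ∀ i, ∃ C, IsClopen C ∧ g^[i] z ∈ C ∧ C ⊆ UniformSpace.ball (g^[i] z) U := fun i =>
    isTopologicalBasis_isClopen.mem_nhds_iff.1 (UniformSpace.ball_mem_nhds _ hU)
  choose C hC_clopen hC_mem hC_ball using hC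
  have hopen := isOpen_setOf_forall_iterate_mem_mod hg hper
    (minimalPeriod_pos_of_mem_periodicPts (hper z)) hC_clopen
  filter_upwards [hopen.mem_nhds fun n => iterate_mod_minimalPeriod_eq ▸ hC_mem _] with x hx n
  rw [← iterate_mod_minimalPeriod_eq]
  exact hC_ball _ (hx n)

theorem stmt7 {X : Type*} [MetricSpace X] [CompactSpace X] [TotallyDisconnectedSpace X]
    (f : X ≃ₜ X) (hper : ∀ x : X, ∃ n > 0, (⇑f)^[n] x = x) :
    ∀ ε > (0:ℝ), ∃ δ > (0:ℝ), ∀ x y : X, dist x y < δ →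
      ∀ n : ℕ, dist ((⇑f)^[n] x) ((⇑f)^[n] y) < ε :=
  Metric.uniformEquicontinuous_iff.1 <| CompactSpace.uniformEquicontinuous_of_equicontinuous <|
    equicontinuous_iterate_of_forall_mem_periodicPts f.continuous hper
end

section
/- Let f : X → X be a pointwise periodic homeomorphism of a compact metric space X. If A ∈ 2^X is an almost periodic point of the induced hyperspace map 2^f, then the union ⋃_{n∈ℕ} f^n(A) is a closed subset of X and is strongly f-invariant (f maps it onto itself). -/
open TopologicalSpace Metric Set Filter

lemma hyper_iter {X : Type*} [MetricSpace X] (f : X ≃ₜ X) (A : NonemptyCompacts X) (n : ℕ) :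
    (((hyper f)^[n] A : NonemptyCompacts X) : Set X) = (⇑f)^[n] '' (A : Set X) := by
  induction n with
  | zero => simp
  | succ n ih =>
    rw [Function.iterate_succ_apply']
    show ⇑f '' (((hyper f)^[n] A : NonemptyCompacts X) : Set X) = _
    rw [ih, ← Set.image_comp, ← Function.iterate_succ']

theorem stmt8 {X : Type*} [MetricSpace X] [CompactSpace X]
    (f : X ≃ₜ X) (hper : ∀ x : X, ∃ n > 0, (⇑f)^[n] x = x)
    (A : NonemptyCompacts X) (hAP : IsAP (hyper f) A) :
    IsClosed (⋃ n : ℕ, (⇑f)^[n] '' (A : Set X)) ∧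
    f '' (⋃ n : ℕ, (⇑f)^[n] '' (A : Set X)) = ⋃ n : ℕ, (⇑f)^[n] '' (A : Set X) := by
  set U := ⋃ n : ℕ, (⇑f)^[n] '' (A : Set X) with hU
  have key : closure U ⊆ U := by
    intro y hy
    by_contra hyU
    obtain ⟨p, hp, hpy⟩ := hper y
    have horb : ∀ j, (⇑f)^[j] y ∉ (A : Set X) := by
      intro j hj
      apply hyU
      have hjle : j ≤ p * j + p := by nlinarith
      refine Set.mem_iUnion.mpr ⟨p * j + p - j, ⟨(⇑f)^[j] y, hj, ?_⟩⟩
      rw [← Function.iterate_add_apply]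
      have : p * j + p - j + j = p * (j + 1) := by rw [Nat.mul_succ]; omega
      rw [this]
      have : Function.IsPeriodicPt (⇑f) p y := hpy
      exact (this.mul_const (j+1)).eq
    have hA_closed : IsClosed (A : Set X) := A.isCompact.isClosed
    have hpos : ∀ j, 0 < infDist ((⇑f)^[j] y) (A : Set X) := fun j =>
      (hA_closed.notMem_iff_infDist_pos A.nonempty).mp (horb j)
    set η := (Finset.range p).inf' (show (Finset.range p).Nonempty from ⟨0, Finset.mem_range.mpr hp⟩)
      (fun j => infDist ((⇑f)^[j] y) (A : Set X)) with hηdef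
    have hη : 0 < η := by
      rw [hηdef, Finset.lt_inf'_iff]
      exact fun j _ => hpos j
    have hηle : ∀ j, η ≤ infDist ((⇑f)^[j] y) (A : Set X) := by
      intro j
      have h1 : η ≤ infDist ((⇑f)^[j % p] y) (A : Set X) :=
        Finset.inf'_le _ (Finset.mem_range.mpr (Nat.mod_lt _ hp))
      have h2 : Function.IsPeriodicPt (⇑f) p y := hpy
      rwa [h2.iterate_mod_apply j] at h1
    obtain ⟨N, hN⟩ := hAP (η/2) (by positivity)
    have hN0 : 0 < N := by obtain ⟨i, hi, _⟩ := hN 0; omega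
    have hcont : ∀ i : ℕ, ∃ δ > (0:ℝ), ∀ x, dist x y < δ →
        dist ((⇑f)^[i] x) ((⇑f)^[i] y) < η/2 := by
      intro i
      have hc : ContinuousAt ((⇑f)^[i]) y := (f.continuous.iterate i).continuousAt
      obtain ⟨δ, hδ0, hδ⟩ := Metric.continuousAt_iff.mp hc (η/2) (by positivity)
      exact ⟨δ, hδ0, fun x hx => hδ hx⟩
    choose δf hδf0 hδf using hcont
    set δ := (Finset.range N).inf' (show (Finset.range N).Nonempty from ⟨0, Finset.mem_range.mpr hN0⟩) δf with hδdef
    have hδ0 : 0 < δ := by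
      rw [hδdef, Finset.lt_inf'_iff]
      exact fun i _ => hδf0 i
    obtain ⟨x, hxU, hxy⟩ := Metric.mem_closure_iff.mp hy δ hδ0
    obtain ⟨n, a, ha, hax⟩ : ∃ n, ∃ a ∈ (A : Set X), (⇑f)^[n] a = x := by
      simpa [hU, Set.mem_iUnion] using hxU
    obtain ⟨i, hiN, hdist⟩ := hN n
    have hmem : (⇑f)^[i] x ∈ (((hyper f)^[n+i] A : NonemptyCompacts X) : Set X) := by
      rw [hyper_iter]
      refine ⟨a, ha, ?_⟩
      rw [add_comm, Function.iterate_add_apply, hax]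
    rw [NonemptyCompacts.dist_eq] at hdist
    have fin : EMetric.hausdorffEdist
        (((hyper f)^[n+i] A : NonemptyCompacts X) : Set X) (A : Set X) ≠ ⊤ :=
      Metric.hausdorffEdist_ne_top_of_nonempty_of_bounded
        ((hyper f)^[n+i] A).nonempty A.nonempty
        ((hyper f)^[n+i] A).isCompact.isBounded A.isCompact.isBounded
    obtain ⟨b, hbA, hb⟩ := Metric.exists_dist_lt_of_hausdorffDist_lt hmem hdist fin
    have h1 : dist ((⇑f)^[i] x) ((⇑f)^[i] y) < η/2 := by
      apply hδf i x
      calc dist x y = dist y x := dist_comm _ _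
        _ < δ := hxy
        _ ≤ δf i := Finset.inf'_le _ (Finset.mem_range.mpr hiN)
    have h2 : infDist ((⇑f)^[i] y) (A : Set X) < η := by
      calc infDist ((⇑f)^[i] y) (A : Set X) ≤ dist ((⇑f)^[i] y) b := infDist_le_dist_of_mem hbA
        _ ≤ dist ((⇑f)^[i] y) ((⇑f)^[i] x) + dist ((⇑f)^[i] x) b := dist_triangle _ _ _
        _ < η/2 + η/2 := by rw [dist_comm] at h1; linarith
        _ = η := by ring
    exact absurd h2 (not_lt.mpr (hηle i))
  refine ⟨isClosed_of_closure_subset key, ?_⟩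
  apply Set.Subset.antisymm
  · rw [Set.image_iUnion]
    refine Set.iUnion_subset fun n => ?_
    rw [← Set.image_comp, ← Function.iterate_succ']
    exact Set.subset_iUnion (fun m => (⇑f)^[m] '' (A : Set X)) (n + 1)
  · intro x hx
    obtain ⟨n, a, ha, hax⟩ : ∃ n, ∃ a ∈ (A : Set X), (⇑f)^[n] a = x := by
      simpa [hU, Set.mem_iUnion] using hx
    obtain ⟨p, hp, hpx⟩ := hper x
    refine ⟨(⇑f)^[p-1] x, ?_, ?_⟩
    · refine Set.mem_iUnion.mpr ⟨p - 1 + n, ⟨a, ha, ?_⟩⟩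
      rw [Function.iterate_add_apply, hax]
    · have hp1 : p - 1 + 1 = p := by omega
      calc f ((⇑f)^[p-1] x) = (⇑f)^[p-1+1] x := (Function.iterate_succ_apply' (⇑f) (p-1) x).symm
        _ = x := by rw [hp1, hpx]
end

section
/- Let f : X → X be a pointwise periodic homeomorphism of a compact metric space. Every topologically transitive subsystem of (2^X, 2^f) that contains a periodic point of 2^f is a finite periodic orbit. In particular, (2^X, 2^f) has no Devaney chaotic subsystem on an infinite phase space. -/
open TopologicalSpace Metric Set Filter

namespace Stmt18

lemma hyper_iterate_coe {X : Type*} [MetricSpace X] (f : X ≃ₜ X) (n : ℕ) (A : NonemptyCompacts X) :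
    (((hyper f)^[n] A : NonemptyCompacts X) : Set X) = (⇑f)^[n] '' (A : Set X) := by
  induction n generalizing A with
  | zero => simp
  | succ n ih =>
    rw [Function.iterate_succ_apply, ih, Function.iterate_succ, Set.image_comp]
    rfl

lemma pigeon (D : ℕ → ℝ) (m : ℕ) (hm : 0 < m) (H : ∀ ε > (0:ℝ), ∃ i, D i < ε) :
    ∃ a < m, ∀ ε > (0:ℝ), ∃ i, i % m = a ∧ D i < ε := by
  by_contra hc
  push_neg at hc
  have hc' : ∀ a : ℕ, ∃ ε, 0 < ε ∧ ∀ i, i % m = a → ε ≤ D i := by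
    intro a
    by_cases ha : a < m
    · obtain ⟨ε, hε, h⟩ := hc a ha
      exact ⟨ε, hε, h⟩
    · exact ⟨1, one_pos, fun i hi => absurd (hi ▸ Nat.mod_lt i hm) ha⟩
  choose ε hεpos hεD using hc'
  obtain ⟨a₀, ha₀, hmin⟩ := Finset.exists_min_image (Finset.range m) ε ⟨0, Finset.mem_range.mpr hm⟩
  obtain ⟨i, hi⟩ := H (ε a₀) (hεpos a₀)
  exact absurd hi (not_lt.mpr (le_trans (hmin (i % m) (Finset.mem_range.mpr (Nat.mod_lt i hm)))
    (hεD (i % m) i rfl)))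

lemma hyper_continuous {X : Type*} [MetricSpace X] [CompactSpace X] (f : X ≃ₜ X) :
    Continuous (hyper f) := by
  rw [Metric.continuous_iff]
  intro A ε hε
  obtain ⟨δ, hδ, hfδ⟩ := Metric.uniformContinuous_iff.mp
    (CompactSpace.uniformContinuous_of_continuous f.continuous) (ε/2) (by positivity)
  refine ⟨δ, hδ, fun B hB => ?_⟩
  have hBA : hausdorffDist (B : Set X) (A : Set X) < δ := by
    rw [NonemptyCompacts.dist_eq] at hB; exact hB
  have hfin : EMetric.hausdorffEdist (B : Set X) (A : Set X) ≠ ⊤ :=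
    hausdorffEdist_ne_top_of_nonempty_of_bounded B.nonempty A.nonempty
      B.isCompact.isBounded A.isCompact.isBounded
  have key : hausdorffDist (f '' (B : Set X)) (f '' (A : Set X)) ≤ ε/2 := by
    apply hausdorffDist_le_of_mem_dist (by positivity)
    · rintro x ⟨b, hb, rfl⟩
      obtain ⟨a, ha, hab⟩ := exists_dist_lt_of_hausdorffDist_lt hb hBA hfin
      exact ⟨f a, Set.mem_image_of_mem _ ha, (hfδ hab).le⟩
    · rintro x ⟨a, ha, rfl⟩
      obtain ⟨b, hb, hba⟩ := exists_dist_lt_of_hausdorffDist_lt' ha hBA hfin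
      exact ⟨f b, Set.mem_image_of_mem _ hb, (by rw [dist_comm]; exact (hfδ hba).le)⟩
  calc dist (hyper f B) (hyper f A) = hausdorffDist (f '' (B : Set X)) (f '' (A : Set X)) :=
        NonemptyCompacts.dist_eq
    _ ≤ ε/2 := key
    _ < ε := by linarith

lemma exists_transitive_point {X : Type*} [MetricSpace X] [CompactSpace X] (f : X ≃ₜ X)
    (Z : Set (NonemptyCompacts X)) (hZne : Z.Nonempty) (hZcl : IsClosed Z)
    (htrans : ∀ U V : Set (NonemptyCompacts X), IsOpen U → IsOpen V →
      (U ∩ Z).Nonempty → (V ∩ Z).Nonempty →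
      ∃ n : ℕ, ((hyper f)^[n] ⁻¹' U ∩ V ∩ Z).Nonempty) :
    ∃ T ∈ Z, ∀ Q ∈ Z, ∀ ε > (0:ℝ), ∃ n : ℕ, dist ((hyper f)^[n] T) Q < ε := by
  classical
  haveI : CompactSpace ↥Z := isCompact_iff_compactSpace.mp (hZcl.isCompact)
  set 𝓑 : Set (Set (NonemptyCompacts X)) :=
    {B ∈ countableBasis (NonemptyCompacts X) | (B ∩ Z).Nonempty} with h𝓑
  haveI : Countable ↥𝓑 :=
    ((countable_countableBasis (NonemptyCompacts X)).mono (sep_subset _ _)).to_subtype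
  set D : ↥𝓑 → Set ↥Z := fun B => {z : ↥Z | ∃ n : ℕ, (hyper f)^[n] ↑z ∈ (B : Set (NonemptyCompacts X))}
    with hD
  have hDopen : ∀ B, IsOpen (D B) := by
    intro B
    have heq : D B = ⋃ n : ℕ, (fun z : ↥Z => (hyper f)^[n] ↑z) ⁻¹' (B : Set (NonemptyCompacts X)) := by
      ext z; simp [hD]
    rw [heq]
    exact isOpen_iUnion fun n => ((isOpen_of_mem_countableBasis B.2.1).preimage
      (((hyper_continuous f).iterate n).comp continuous_subtype_val))
  have hDdense : ∀ B, Dense (D B) := by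
    intro B
    rw [dense_iff_inter_open]
    rintro U hU ⟨z₀, hz₀⟩
    obtain ⟨V, hVopen, hVeq⟩ := isOpen_induced_iff.mp hU
    obtain ⟨n, B', hB'⟩ := htrans (B : Set (NonemptyCompacts X)) V
      (isOpen_of_mem_countableBasis B.2.1) hVopen B.2.2
      ⟨↑z₀, by rw [← hVeq] at hz₀; exact ⟨hz₀, z₀.2⟩⟩
    exact ⟨⟨B', hB'.2⟩, by rw [← hVeq]; exact hB'.1.2, ⟨n, hB'.1.1⟩⟩
  haveI : Nonempty ↥Z := hZne.to_subtype
  obtain ⟨T, hT⟩ := (dense_iInter_of_isOpen hDopen hDdense).nonempty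
  refine ⟨↑T, T.2, fun Q hQ ε hε => ?_⟩
  obtain ⟨B, hBbasis, hQB, hBsub⟩ :=
    (isBasis_countableBasis (NonemptyCompacts X)).exists_subset_of_mem_open
      (Metric.mem_ball_self hε) Metric.isOpen_ball
  obtain ⟨n, hn⟩ := mem_iInter.mp hT ⟨B, hBbasis, ⟨Q, hQB, hQ⟩⟩
  exact ⟨n, by have := hBsub hn; rwa [Metric.mem_ball] at this⟩

end Stmt18

theorem stmt18 {X : Type*} [MetricSpace X] [CompactSpace X]
    (f : X ≃ₜ X) (hper : ∀ x : X, ∃ n > 0, (⇑f)^[n] x = x)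
    (Z : Set (NonemptyCompacts X)) (hZne : Z.Nonempty) (hZcl : IsClosed Z)
    (hZinv : Set.MapsTo (hyper f) Z Z)
    (htrans : ∀ U V : Set (NonemptyCompacts X), IsOpen U → IsOpen V →
      (U ∩ Z).Nonempty → (V ∩ Z).Nonempty →
      ∃ n : ℕ, ((hyper f)^[n] ⁻¹' U ∩ V ∩ Z).Nonempty)
    (hPer : ∃ P ∈ Z, ∃ N > 0, (hyper f)^[N] P = P) :
    Z.Finite ∧ ∃ A ∈ Z, ∃ N > 0, (hyper f)^[N] A = A ∧
      Z = Set.range fun n : ℕ => (hyper f)^[n] A := by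
  classical
  obtain ⟨T, hTZ, hT⟩ := Stmt18.exists_transitive_point f Z hZne hZcl htrans
  have hmem : ∀ n, (hyper f)^[n] T ∈ Z := fun n => hZinv.iterate n hTZ
  have hinj : Function.Injective (hyper f) := by
    intro A B hAB
    have h1 : (f '' (A : Set X)) = f '' (B : Set X) :=
      congrArg (fun C : NonemptyCompacts X => (C : Set X)) hAB
    exact NonemptyCompacts.ext (f.injective.image_injective h1)
  -- T is periodic
  have hTper : ∃ M > 0, (hyper f)^[M] T = T := by
    by_contra hnp
    push_neg at hnp
    obtain ⟨P, hPZ, N, hN, hPN⟩ := hPer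
    obtain ⟨ρ, hρN, hΨ⟩ := Stmt18.pigeon (fun n => dist ((hyper f)^[n] T) P) N hN
      (fun ε hε => hT P hPZ ε hε)
    set σ := N - ρ with hσ
    set P' := (hyper f)^[σ] P with hP'def
    have hP'Z : P' ∈ Z := hZinv.iterate σ hPZ
    have hP'N : (hyper f)^[N] P' = P' := by
      rw [hP'def, ← Function.iterate_add_apply, Nat.add_comm, Function.iterate_add_apply, hPN]
    have hΦ0 : ∀ ε > (0:ℝ), ∃ n, n % N = 0 ∧ dist ((hyper f)^[n] T) P' < ε := by
      intro ε hε
      obtain ⟨δ, hδ, hδ'⟩ := Metric.continuous_iff.mp ((Stmt18.hyper_continuous f).iterate σ) P ε hε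
      obtain ⟨n, hn1, hn2⟩ := hΨ δ hδ
      refine ⟨n + σ, ?_, ?_⟩
      · obtain ⟨c, hc⟩ : ∃ c, n = N * c + ρ := ⟨n / N, by rw [← hn1]; exact (Nat.div_add_mod n N).symm⟩
        have hns : n + σ = N * (c + 1) := by
          rw [hc, hσ, Nat.add_assoc, Nat.add_sub_cancel' hρN.le, Nat.mul_succ]
        rw [hns]; exact Nat.mul_mod_right _ _
      · have h2 := hδ' _ hn2
        rwa [← Function.iterate_add_apply, Nat.add_comm] at h2
    -- move to sets
    set g : X → X := (⇑f)^[N] with hg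
    have hgc : Continuous g := f.continuous.iterate N
    have hginj : Function.Injective g := f.injective.iterate N
    set Tc : Set X := (T : Set X) with hTcdef
    set Pc : Set X := (P' : Set X) with hPcdef
    have hPcne : Pc.Nonempty := P'.nonempty
    have hPccl : IsClosed Pc := P'.isCompact.isClosed
    have hTcne : Tc.Nonempty := T.nonempty
    have hTccl : IsClosed Tc := T.isCompact.isClosed
    have hgPc : g '' Pc = Pc := by
      have h1 : (((hyper f)^[N] P' : NonemptyCompacts X) : Set X) = (P' : Set X) :=
        congrArg (fun C : NonemptyCompacts X => (C : Set X)) hP'N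
      rw [Stmt18.hyper_iterate_coe] at h1
      exact h1
    have hgPc_iter : ∀ i, g^[i] '' Pc = Pc := by
      intro i; induction i with
      | zero => simp
      | succ i ih => rw [Function.iterate_succ', Set.image_comp, ih, hgPc]
    have gper : ∀ x : X, ∃ p > 0, g^[p] x = x := by
      intro x
      obtain ⟨n, hn, hx⟩ := hper x
      refine ⟨n, hn, ?_⟩
      rw [hg, ← Function.iterate_mul, Nat.mul_comm, Function.iterate_mul]
      exact Function.iterate_fixed hx N
    have hΦ : ∀ ε > (0:ℝ), ∃ i, hausdorffDist (g^[i] '' Tc) Pc < ε := by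
      intro ε hε
      obtain ⟨n, hn0, hnd⟩ := hΦ0 ε hε
      refine ⟨n / N, ?_⟩
      have hnn : N * (n / N) = n := by
        have hdm := Nat.div_add_mod n N
        rw [hn0, Nat.add_zero] at hdm
        exact hdm
      have himg : g^[n / N] '' Tc = (((hyper f)^[n] T : NonemptyCompacts X) : Set X) := by
        rw [Stmt18.hyper_iterate_coe, hg, ← Function.iterate_mul, hnn]
      rw [himg]
      rwa [NonemptyCompacts.dist_eq] at hnd
    have hEfin : ∀ S : Set X, IsCompact S → S.Nonempty →
        EMetric.hausdorffEdist S Pc ≠ ⊤ := fun S hS hSne =>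
      hausdorffEdist_ne_top_of_nonempty_of_bounded hSne hPcne hS.isBounded P'.isCompact.isBounded
    have himgcpt : ∀ i, IsCompact (g^[i] '' Tc) := fun i => T.isCompact.image (hgc.iterate i)
    have himgne : ∀ i, (g^[i] '' Tc).Nonempty := fun i => T.nonempty.image _
    -- Part 1 : Tc ⊆ Pc
    have hTcPc : Tc ⊆ Pc := by
      intro x hx
      obtain ⟨p, hp, hpx⟩ := gper x
      obtain ⟨a, hap, hGood⟩ := Stmt18.pigeon (fun i => hausdorffDist (g^[i] '' Tc) Pc) p hp hΦ
      have hfixa : g^[p] (g^[a] x) = g^[a] x := by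
        rw [← Function.iterate_add_apply, Nat.add_comm, Function.iterate_add_apply, hpx]
      have hmema : g^[a] x ∈ Pc := by
        rw [hPccl.mem_iff_infDist_zero hPcne]
        by_contra hne
        have hpos : 0 < infDist (g^[a] x) Pc := lt_of_le_of_ne infDist_nonneg (Ne.symm hne)
        obtain ⟨i, hia, hid⟩ := hGood _ hpos
        have h1 : g^[i] x = g^[a] x := by
          conv_lhs => rw [← Nat.div_add_mod i p]
          rw [hia, Function.iterate_add_apply, Function.iterate_mul]
          exact Function.iterate_fixed hfixa (i / p)
        have h2 : infDist (g^[a] x) Pc ≤ hausdorffDist (g^[i] '' Tc) Pc := by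
          rw [← h1]
          exact infDist_le_hausdorffDist_of_mem (Set.mem_image_of_mem _ hx)
            (hEfin _ (himgcpt i) (himgne i))
        linarith
      have hxa : x = g^[p - a] (g^[a] x) := by
        rw [← Function.iterate_add_apply, Nat.sub_add_cancel (Nat.le_of_lt hap), hpx]
      rw [hxa, ← hgPc_iter (p - a)]
      exact Set.mem_image_of_mem _ hmema
    -- Pc ⊄ Tc gives a hole
    have hnsub : ¬ Pc ⊆ Tc := by
      intro hsub
      have hTP' : T = P' := NonemptyCompacts.ext (Set.Subset.antisymm hTcPc hsub)
      exact hnp N hN (by rw [hTP', hP'N])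
    obtain ⟨y₀', hy₀'⟩ := Set.not_subset.mp hnsub
    set G : Set X := Pc \ Tc with hGdef
    have hGne : G.Nonempty := ⟨y₀', hy₀'.1, hy₀'.2⟩
    set K : Set X := closure G with hKdef
    have hKcl : IsClosed K := isClosed_closure
    haveI hKcs : CompactSpace ↥K := isCompact_iff_compactSpace.mp hKcl.isCompact
    haveI : Nonempty ↥K := (hGne.mono subset_closure).to_subtype
    have hcover : (⋃ q : ℕ, {x : ↥K | g^[q+1] (↑x : X) = ↑x}) = univ := by
      ext x
      simp only [Set.mem_iUnion, Set.mem_univ, iff_true, Set.mem_setOf_eq]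
      obtain ⟨p, hp, hpx⟩ := gper (↑x : X)
      exact ⟨p - 1, by rw [Nat.sub_add_cancel hp]; exact hpx⟩
    obtain ⟨q₀, hq₀⟩ := nonempty_interior_of_iUnion_of_closed
      (fun q => isClosed_eq ((hgc.iterate (q+1)).comp continuous_subtype_val)
        continuous_subtype_val) hcover
    obtain ⟨xb, hxb⟩ := hq₀
    set q := q₀ + 1 with hqdef
    have hq0 : 0 < q := Nat.succ_pos _
    obtain ⟨U, hUopen, hUeq⟩ := isOpen_induced_iff.mp
      (isOpen_interior (s := {x : ↥K | g^[q₀+1] (↑x : X) = ↑x}))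
    have hUfix : ∀ u, u ∈ U → u ∈ K → g^[q] u = u := by
      intro u hu huK
      have h1 : (⟨u, huK⟩ : ↥K) ∈ interior {x : ↥K | g^[q₀+1] (↑x : X) = ↑x} := by
        rw [← hUeq]; exact hu
      have h2 := interior_subset h1
      exact h2
    have hxbU : (↑xb : X) ∈ U := by
      have h1 : xb ∈ Subtype.val ⁻¹' U := by rw [hUeq]; exact hxb
      exact h1
    obtain ⟨y₀, hy₀U, hy₀G⟩ : (U ∩ G).Nonempty := by
      have hxbK : (↑xb : X) ∈ closure G := xb.2
      exact _root_.mem_closure_iff.mp hxbK U hUopen hxbU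
    have hy₀Pc : y₀ ∈ Pc := hy₀G.1
    have hy₀T : y₀ ∉ Tc := hy₀G.2
    have hdy₀ : 0 < infDist y₀ Tc := by
      have h1 : infDist y₀ Tc ≠ 0 := fun h0 => hy₀T ((hTccl.mem_iff_infDist_zero hTcne).mpr h0)
      exact lt_of_le_of_ne infDist_nonneg (Ne.symm h1)
    set W : Set X := U ∩ Metric.ball y₀ (infDist y₀ Tc) with hWdef
    have hWopen : IsOpen W := hUopen.inter Metric.isOpen_ball
    have hy₀W : y₀ ∈ W := ⟨hy₀U, Metric.mem_ball_self hdy₀⟩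
    have hWfix : ∀ u ∈ W ∩ Pc, g^[q] u = u := by
      rintro u ⟨⟨huU, hub⟩, huP⟩
      have hunotT : u ∉ Tc := by
        intro huT
        have h1 : infDist y₀ Tc ≤ dist u y₀ := by
          rw [dist_comm]; exact infDist_le_dist_of_mem huT
        rw [Metric.mem_ball] at hub; linarith
      exact hUfix u huU (subset_closure ⟨huP, hunotT⟩)
    -- the rule
    obtain ⟨r, hrq, hGoodr⟩ := Stmt18.pigeon (fun i => hausdorffDist (g^[i] '' Tc) Pc) q hq0 hΦ
    set g' : X → X := (⇑f.symm)^[N] with hg'def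
    have hg'c : Continuous g' := f.symm.continuous.iterate N
    have hLI : Function.LeftInverse g' g := by
      intro x
      exact (Function.LeftInverse.iterate f.symm_apply_apply N) x
    have hRI : Function.LeftInverse g g' := by
      intro x
      exact (Function.LeftInverse.iterate f.apply_symm_apply N) x
    have hLIit : ∀ m, Function.LeftInverse (g'^[m]) (g^[m]) := fun m => hLI.iterate m
    have hRIit : ∀ m, Function.LeftInverse (g^[m]) (g'^[m]) := fun m => hRI.iterate m
    have hrule : ∀ z ∈ Pc, (∃ W', IsOpen W' ∧ z ∈ W' ∧ ∀ u ∈ W' ∩ Pc, g^[q] u = u) →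
        (g'^[r] z ∈ Pc ∧ g'^[r] z ∈ Tc ∧
          ∃ W'', IsOpen W'' ∧ g'^[r] z ∈ W'' ∧ ∀ u ∈ W'' ∩ Pc, g^[q] u = u) := by
      rintro z hzP ⟨W', hW'o, hzW', hW'fix⟩
      have hPmem : g'^[r] z ∈ Pc := by
        have hz' : z ∈ g^[r] '' Pc := by rw [hgPc_iter r]; exact hzP
        obtain ⟨u, huP, hu⟩ := hz'
        rw [← hu, hLIit r u]
        exact huP
      refine ⟨hPmem, ?_, ?_⟩
      · rw [hTccl.mem_iff_infDist_zero hTcne]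
        by_contra hne
        have hpos : 0 < infDist (g'^[r] z) Tc := lt_of_le_of_ne infDist_nonneg (Ne.symm hne)
        obtain ⟨δ₁, hδ₁, hδ₁'⟩ := Metric.continuous_iff.mp (hg'c.iterate r) z _ hpos
        obtain ⟨δ₂, hδ₂, hδ₂'⟩ := Metric.isOpen_iff.mp hW'o z hzW'
        obtain ⟨i, hir, hid⟩ := hGoodr (min δ₁ δ₂) (lt_min hδ₁ hδ₂)
        obtain ⟨w, hw, hwd⟩ := exists_dist_lt_of_hausdorffDist_lt' hzP hid
          (hEfin _ (himgcpt i) (himgne i))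
        have hwP : w ∈ Pc := by
          rw [← hgPc_iter i]; exact (Set.image_mono hTcPc) hw
        have hwW' : w ∈ W' := hδ₂' (by
          rw [Metric.mem_ball]
          exact lt_of_lt_of_le hwd (min_le_right _ _))
        have hwfix : g^[q] w = w := hW'fix w ⟨hwW', hwP⟩
        obtain ⟨t, htT, htw⟩ := hw
        have hkey : g^[i] (g'^[r] w) = w := by
          conv_lhs => rw [← Nat.div_add_mod i q]
          rw [hir, Function.iterate_add_apply, hRIit r w, Function.iterate_mul]
          exact Function.iterate_fixed hwfix (i / q)
        have htgw : t = g'^[r] w := (hginj.iterate i) (htw.trans hkey.symm)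
        have hd1 : dist w z < δ₁ := lt_of_lt_of_le hwd (min_le_left _ _)
        have hd : dist (g'^[r] w) (g'^[r] z) < infDist (g'^[r] z) Tc := hδ₁' w hd1
        have hle : infDist (g'^[r] z) Tc ≤ dist (g'^[r] z) (g'^[r] w) := by
          rw [htgw] at htT
          exact infDist_le_dist_of_mem htT
        rw [dist_comm] at hd
        linarith
      · refine ⟨g^[r] ⁻¹' W', hW'o.preimage (hgc.iterate r), ?_, ?_⟩
        · rw [Set.mem_preimage, hRIit r z]; exact hzW'
        · rintro u ⟨hu1, hu2⟩
          have h3 : g^[q] (g^[r] u) = g^[r] u := hW'fix _ ⟨hu1, by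
            rw [← hgPc_iter r]; exact Set.mem_image_of_mem _ hu2⟩
          have h4 : g^[r] (g^[q] u) = g^[r] u := by
            rw [← Function.iterate_add_apply, Nat.add_comm, Function.iterate_add_apply, h3]
          exact (hginj.iterate r) h4
    -- induction
    have hind : ∀ k : ℕ, ((g'^[r])^[k] y₀ ∈ Pc ∧
        (∃ W'', IsOpen W'' ∧ (g'^[r])^[k] y₀ ∈ W'' ∧ ∀ u ∈ W'' ∩ Pc, g^[q] u = u)) ∧
        (1 ≤ k → (g'^[r])^[k] y₀ ∈ Tc) := by
      intro k
      induction k with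
      | zero => exact ⟨⟨hy₀Pc, ⟨W, hWopen, hy₀W, hWfix⟩⟩, by omega⟩
      | succ k ih =>
        obtain ⟨⟨hp1, hch⟩, _⟩ := ih
        obtain ⟨hP1, hT1, hch1⟩ := hrule _ hp1 hch
        rw [Function.iterate_succ_apply']
        exact ⟨⟨hP1, hch1⟩, fun _ => hT1⟩
    have hyfix : g^[q] y₀ = y₀ := hWfix y₀ ⟨hy₀W, hy₀Pc⟩
    have hzq : (g'^[r])^[q] y₀ = y₀ := by
      have h5 : g^[r*q] y₀ = y₀ := by
        rw [Nat.mul_comm, Function.iterate_mul]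
        exact Function.iterate_fixed hyfix r
      calc (g'^[r])^[q] y₀ = g'^[r*q] y₀ := by rw [Function.iterate_mul]
        _ = g'^[r*q] (g^[r*q] y₀) := by rw [h5]
        _ = y₀ := hLIit (r*q) y₀
    exact hy₀T (by rw [← hzq]; exact (hind q).2 hq0)
  -- conclude
  obtain ⟨M, hM, hTM⟩ := hTper
  have hrangefin : (Set.range fun n : ℕ => (hyper f)^[n] T).Finite := by
    apply Set.Finite.subset ((Set.finite_Iio M).image fun n => (hyper f)^[n] T)
    rintro z ⟨n, rfl⟩
    refine ⟨n % M, Nat.mod_lt n hM, ?_⟩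
    show (hyper f)^[n % M] T = (hyper f)^[n] T
    conv_rhs => rw [← Nat.mod_add_div n M]
    rw [Function.iterate_add_apply, Function.iterate_mul, Function.iterate_fixed hTM]
  have hZrange : Z = Set.range fun n : ℕ => (hyper f)^[n] T := by
    apply Set.Subset.antisymm
    · intro z hz
      rw [← hrangefin.isClosed.closure_eq]
      rw [Metric.mem_closure_iff]
      intro ε hε
      obtain ⟨n, hn⟩ := hT z hz ε hε
      exact ⟨(hyper f)^[n] T, ⟨n, rfl⟩, by rwa [dist_comm]⟩
    · rintro z ⟨n, rfl⟩; exact hmem n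
  exact ⟨by rw [hZrange]; exact hrangefin, T, hTZ, M, hM, hTM, hZrange⟩
end
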